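/- arXiv:1709.07379 — 4 statements merged into one kernel-verified Lean document; each statement's English description precedes it below -/
import Mathlib

section
/- For a function f : ℤⁿ → ℝ (restricted to a product of finite integer intervals), if the cross-difference condition f(x + e_i + e_j) − f(x + e_j) ≤ f(x + e_i) − f(x) holds for all x and all i ≠ j, then for any two points x, y in the domain, f(max(x,y)) + f(min(x,y)) ≤ f(x) + f(y), where max and min are componentwise. -/
/-!
Fix `x` and let `u` climb from `x ⊓ y` to `y` by unit steps. A step `u ↦ u + eⱼ` only happens
where `x j ≤ u j`, so it also moves `x ⊔ u` by `eⱼ`, and decreasing differences (propagated from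
adjacent points to comparable points `u ≤ x ⊔ u` agreeing in coordinate `j`) says that
`f (x ⊔ u) - f u` cannot increase. Comparing its values at `u = x ⊓ y` and `u = y` is the claim.
-/

theorem apply_le_apply_of_add_single_le {ι β : Type*} [Fintype ι] [DecidableEq ι] [Preorder β]
    {g : (ι → ℤ) → β} {z w : ι → ℤ} (hzw : z ≤ w)
    (hg : ∀ u j, z ≤ u → u + Pi.single j 1 ≤ w → g (u + Pi.single j 1) ≤ g u) :
    g w ≤ g z := by
  obtain ⟨N, hN⟩ := Int.eq_ofNat_of_zero_le (Finset.sum_nonneg fun k _ => sub_nonneg.2 (hzw k))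
  induction N generalizing w with
  | zero =>
    have hwz : w = z := funext fun k => by
      have := (Finset.sum_eq_zero_iff_of_nonneg fun k _ => sub_nonneg.2 (hzw k)).1 hN k
        (Finset.mem_univ k)
      omega
    rw [hwz]
  | succ N ih =>
    obtain ⟨j, hj⟩ : ∃ j, z j < w j := by
      by_contra! hle
      have := Finset.sum_nonpos fun k (_ : k ∈ Finset.univ) => sub_nonpos.2 (hle k)
      omega
    set w' := w - Pi.single j 1
    have hw' : w' + Pi.single j 1 = w := sub_add_cancel w _
    have hzw' : z ≤ w' := fun k => by
      rcases eq_or_ne k j with rfl | hk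
      · simp [w']
        omega
      · simpa [w', hk] using hzw k
    have hN' : ∑ k, (w' k - z k) = N := by
      simp only [w', Pi.sub_apply, Finset.sum_sub_distrib, Finset.sum_pi_single', Finset.mem_univ,
        if_true] at hN ⊢
      omega
    have hw'w : w' ≤ w := hw' ▸ le_add_of_nonneg_right (Pi.single_nonneg.2 zero_le_one)
    calc g w = g (w' + Pi.single j 1) := by rw [hw']
      _ ≤ g w' := hg w' j hzw' hw'.le
      _ ≤ g z := ih hzw' (fun u k hu huw => hg u k hu (huw.trans hw'w)) hN'

theorem sup_add_single_of_le {ι α : Type*} [DecidableEq ι] [AddCommGroup α] [LinearOrder α]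
    [IsOrderedAddMonoid α] {x u : ι → α} {j : ι} {c : α} (hc : 0 ≤ c) (h : x j ≤ u j) :
    x ⊔ (u + Pi.single j c) = x ⊔ u + Pi.single j c := by
  ext k
  rcases eq_or_ne k j with rfl | hk
  · simp [h, h.trans (le_add_of_nonneg_right hc)]
  · simp [hk]

def DecreasingDifferencesOn {ι β : Type*} [DecidableEq ι] [Sub β] [LE β] (a b : ι → ℤ)
    (f : (ι → ℤ) → β) : Prop :=
  ∀ z i j, i ≠ j → a ≤ z → z + Pi.single i 1 + Pi.single j 1 ≤ b →
    f (z + Pi.single i 1 + Pi.single j 1) - f (z + Pi.single j 1) ≤ f (z + Pi.single i 1) - f z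

namespace DecreasingDifferencesOn

variable {ι β : Type*} [Fintype ι] [DecidableEq ι] {a b : ι → ℤ} {f : (ι → ℤ) → β}

theorem sub_le_sub [Sub β] [Preorder β] (hf : DecreasingDifferencesOn a b f) (i : ι)
    {z w : ι → ℤ} (ha : a ≤ z) (hzw : z ≤ w) (hi : z i = w i) (hb : w + Pi.single i 1 ≤ b) :
    f (w + Pi.single i 1) - f w ≤ f (z + Pi.single i 1) - f z := by
  refine apply_le_apply_of_add_single_le (g := fun u => f (u + Pi.single i 1) - f u) hzw
    fun u j hzu huw => ?_
  have hij : i ≠ j := by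
    rintro rfl
    have := huw i
    simp only [Pi.add_apply, Pi.single_eq_same] at this
    linarith [hzu i]
  have := hf u i j hij (ha.trans hzu)
    (by rw [add_right_comm]; exact (add_le_add huw le_rfl).trans hb)
  rwa [add_right_comm u] at this

variable [AddCommGroup β] [PartialOrder β] [IsOrderedAddMonoid β]

theorem sup_add_single_sub_le (hf : DecreasingDifferencesOn a b f) {x u : ι → ℤ} {j : ι}
    (hxb : x ≤ b) (hau : a ≤ u) (hub : u + Pi.single j 1 ≤ b) (hxu : x j ≤ u j) :
    f (x ⊔ (u + Pi.single j 1)) - f (u + Pi.single j 1) ≤ f (x ⊔ u) - f u := by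
  have hsup := sup_add_single_of_le zero_le_one hxu
  have hj : u j = (x ⊔ u) j := (sup_of_le_right hxu).symm
  have hb : x ⊔ u + Pi.single j 1 ≤ b := hsup ▸ sup_le hxb hub
  have := hf.sub_le_sub j hau le_sup_right hj hb
  rw [hsup, sub_le_sub_iff, add_comm (f (x ⊔ u))]
  exact sub_le_sub_iff.1 this

theorem map_sup_add_map_inf_le (hf : DecreasingDifferencesOn a b f) {x y : ι → ℤ}
    (hax : a ≤ x) (hxb : x ≤ b) (hay : a ≤ y) (hyb : y ≤ b) :
    f (x ⊔ y) + f (x ⊓ y) ≤ f x + f y := by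
  have key : f (x ⊔ y) - f y ≤ f (x ⊔ (x ⊓ y)) - f (x ⊓ y) := by
    refine apply_le_apply_of_add_single_le (g := fun u => f (x ⊔ u) - f u) inf_le_right
      fun u j hu huy => hf.sup_add_single_sub_le hxb ((le_inf hax hay).trans hu)
        (huy.trans hyb) ?_
    have h₁ := hu j
    have h₂ := huy j
    simp only [Pi.inf_apply, Pi.add_apply, Pi.single_eq_same] at h₁ h₂
    omega
  rw [sup_inf_self] at key
  exact sub_le_sub_iff.1 key

end DecreasingDifferencesOn

theorem cross_difference_implies_lattice_submodular {n : ℕ} (a b : Fin n → ℤ)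
    (f : (Fin n → ℤ) → ℝ)
    (h : ∀ (z : Fin n → ℤ) (i j : Fin n), i ≠ j →
      (∀ k, a k ≤ z k) → (∀ k, (z + Pi.single i 1 + Pi.single j 1 : Fin n → ℤ) k ≤ b k) →
      f (z + Pi.single i 1 + Pi.single j 1) - f (z + Pi.single j 1) ≤
        f (z + Pi.single i 1) - f z) :
    ∀ x y : Fin n → ℤ,
      (∀ k, a k ≤ x k ∧ x k ≤ b k) → (∀ k, a k ≤ y k ∧ y k ≤ b k) →
      f (x ⊔ y) + f (x ⊓ y) ≤ f x + f y := fun _ _ hx hy =>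
  DecreasingDifferencesOn.map_sup_add_map_inf_le (a := a) (b := b) h (fun k => (hx k).1)
    (fun k => (hx k).2) (fun k => (hy k).1) (fun k => (hy k).2)
end

section
/- If f : Powerset(S) → ℝ is submodular with f(∅) = 0, then its Lovász extension f_lv is a convex function on [0,1]^|S|. -/
/-!
For a permutation `σ`, submodularity bounds the increment `f (Pₖ₊₁) - f (Pₖ)` along the prefixes
`Pₖ = {σ 0, …, σ (k-1)}` by `f (A ∩ Pₖ₊₁) - f (A ∩ Pₖ)` whenever `σ k ∈ A`; summing and
telescoping, the greedy sum `∑ₖ [σ k ∈ A] (f (Pₖ₊₁) - f (Pₖ))` is at most `f A`, with equality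
when `A` is itself a prefix. Taking for `A` the level sets `{i | t ≤ x i}` and integrating over
`t ∈ [0, 1]` shows that `lovasz f` is the pointwise maximum, over `σ`, of the linear functionals
`x ↦ ∑ₖ (f (Pₖ₊₁) - f (Pₖ)) x (σ k)`, the maximum being attained at a `σ` that sorts `x`
decreasingly. A maximum of linear functionals is convex.
-/

/-- The Lovász extension of a set function, via the threshold (level-set) formula,
which agrees with the greedy sorting formula for `x ∈ [0,1]^m` when `f ∅ = 0`. -/
noncomputable def lovasz {m : ℕ} (f : Finset (Fin m) → ℝ) (x : Fin m → ℝ) : ℝ :=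
  ∫ t in (0:ℝ)..1, f (Finset.univ.filter fun i => t ≤ x i)

open Finset MeasureTheory

theorem convexOn_of_linearMap_le_of_exists_eq {𝕜 E ι : Type*} [CommSemiring 𝕜] [PartialOrder 𝕜]
    [IsOrderedRing 𝕜] [AddCommMonoid E] [Module 𝕜 E] {s : Set E} {g : E → 𝕜}
    (hs : Convex 𝕜 s) (L : ι → E →ₗ[𝕜] 𝕜) (hle : ∀ i, ∀ x ∈ s, L i x ≤ g x)
    (hex : ∀ x ∈ s, ∃ i, L i x = g x) : ConvexOn 𝕜 s g := by
  refine ⟨hs, fun x hx y hy a b ha hb hab => ?_⟩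
  obtain ⟨i, hi⟩ := hex _ (hs hx hy ha hb hab)
  rw [← hi, map_add, map_smul, map_smul]
  exact add_le_add (smul_le_smul_of_nonneg_left (hle i x hx) ha)
    (smul_le_smul_of_nonneg_left (hle i y hy) hb)

theorem intervalIntegrable_ite_le (a c : ℝ) :
    IntervalIntegrable (fun t => if t ≤ a then c else 0) volume 0 1 := by
  rw [intervalIntegrable_iff]
  exact (integrableOn_const (by simp)).indicator (measurableSet_Iic (a := a))

theorem integral_ite_le {a : ℝ} (c : ℝ) (ha : a ∈ Set.Icc (0 : ℝ) 1) :
    ∫ t in (0 : ℝ)..1, (if t ≤ a then c else 0) = c * a := by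
  have : (fun t => if t ≤ a then c else 0) = Set.indicator {t | t ≤ a} fun _ => c := by
    ext t; simp [Set.indicator_apply]
  rw [this, intervalIntegral.integral_indicator ha]
  simp [mul_comm]

theorem intervalIntegrable_sum_ite_le {ι : Type*} (s : Finset ι) (a c : ι → ℝ) :
    IntervalIntegrable (fun t => ∑ i ∈ s, if t ≤ a i then c i else 0) volume 0 1 := by
  simpa only [Finset.sum_fn] using
    IntervalIntegrable.sum s fun i _ => intervalIntegrable_ite_le (a i) (c i)

theorem integral_sum_ite_le {ι : Type*} (s : Finset ι) {a : ι → ℝ} (c : ι → ℝ)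
    (ha : ∀ i ∈ s, a i ∈ Set.Icc (0 : ℝ) 1) :
    ∫ t in (0 : ℝ)..1, ∑ i ∈ s, (if t ≤ a i then c i else 0) = ∑ i ∈ s, c i * a i := by
  rw [intervalIntegral.integral_finsetSum fun i _ => intervalIntegrable_ite_le (a i) (c i)]
  exact sum_congr rfl fun i hi => integral_ite_le (c i) (ha i hi)

namespace Lovasz

variable {m : ℕ}

def prefixSet (σ : Equiv.Perm (Fin m)) (k : ℕ) : Finset (Fin m) :=
  univ.filter fun i => (σ.symm i : ℕ) < k

variable {σ : Equiv.Perm (Fin m)}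

@[simp]
theorem mem_prefixSet {k : ℕ} {i : Fin m} : i ∈ prefixSet σ k ↔ (σ.symm i : ℕ) < k := by
  simp [prefixSet]

@[simp]
theorem prefixSet_zero : prefixSet σ 0 = ∅ := by
  ext; simp

theorem prefixSet_eq_univ : prefixSet σ m = univ := by
  ext; simp

theorem prefixSet_succ (k : Fin m) : prefixSet σ (k + 1) = insert (σ k) (prefixSet σ k) := by
  ext i
  rw [mem_insert, mem_prefixSet, mem_prefixSet, Nat.lt_succ_iff_lt_or_eq, Fin.val_inj,
    Equiv.symm_apply_eq, or_comm]

theorem apply_notMem_prefixSet (k : Fin m) : σ k ∉ prefixSet σ k := by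
  simp

variable {f : Finset (Fin m) → ℝ}

variable (f) in
def marginal (σ : Equiv.Perm (Fin m)) (k : Fin m) : ℝ :=
  f (prefixSet σ (k + 1)) - f (prefixSet σ k)

theorem ite_marginal_le (hf : ∀ A B : Finset (Fin m), f (A ∩ B) + f (A ∪ B) ≤ f A + f B)
    (A : Finset (Fin m)) (k : Fin m) :
    (if σ k ∈ A then marginal f σ k else 0) ≤
      f (A ∩ prefixSet σ (k + 1)) - f (A ∩ prefixSet σ k) := by
  rw [marginal, prefixSet_succ]
  split_ifs with hk
  · have := hf (insert (σ k) (A ∩ prefixSet σ k)) (prefixSet σ k)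
    rw [insert_inter_of_notMem (apply_notMem_prefixSet k), inter_assoc, inter_self, insert_union,
      union_eq_right.2 inter_subset_right] at this
    rw [inter_insert_of_mem hk]
    linarith
  · rw [inter_insert_of_notMem hk, sub_self]

theorem ite_marginal_eq (A : Finset (Fin m)) (k : Fin m) (hA : σ k ∈ A → prefixSet σ k ⊆ A) :
    (if σ k ∈ A then marginal f σ k else 0) =
      f (A ∩ prefixSet σ (k + 1)) - f (A ∩ prefixSet σ k) := by
  rw [marginal, prefixSet_succ]
  split_ifs with hk
  · rw [inter_insert_of_mem hk, inter_eq_right.2 (hA hk)]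
  · rw [inter_insert_of_notMem hk, sub_self]

theorem sum_sub_inter_prefixSet (A : Finset (Fin m)) :
    ∑ k : Fin m, (f (A ∩ prefixSet σ (k + 1)) - f (A ∩ prefixSet σ k)) = f A - f ∅ := by
  rw [Fin.sum_univ_eq_sum_range (fun k => f (A ∩ prefixSet σ (k + 1)) - f (A ∩ prefixSet σ k)),
    sum_range_sub (fun k => f (A ∩ prefixSet σ k)), prefixSet_eq_univ, prefixSet_zero,
    inter_univ, inter_empty]

theorem sum_ite_marginal_le (hf : ∀ A B : Finset (Fin m), f (A ∩ B) + f (A ∪ B) ≤ f A + f B)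
    (h0 : f ∅ = 0) (σ : Equiv.Perm (Fin m)) (A : Finset (Fin m)) :
    ∑ k, (if σ k ∈ A then marginal f σ k else 0) ≤ f A :=
  calc _ ≤ ∑ k : Fin m, (f (A ∩ prefixSet σ (k + 1)) - f (A ∩ prefixSet σ k)) :=
        sum_le_sum fun k _ => ite_marginal_le hf A k
    _ = f A := by rw [sum_sub_inter_prefixSet, h0, sub_zero]

theorem sum_ite_marginal_eq (h0 : f ∅ = 0) (σ : Equiv.Perm (Fin m)) {A : Finset (Fin m)}
    (hA : IsLowerSet {k | σ k ∈ A}) :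
    ∑ k, (if σ k ∈ A then marginal f σ k else 0) = f A := by
  have hprefix (k : Fin m) (hk : σ k ∈ A) : prefixSet σ k ⊆ A := fun i hi => by
    simpa using hA (Fin.le_def.2 (mem_prefixSet.1 hi).le) hk
  rw [sum_congr rfl fun k _ => ite_marginal_eq A k (hprefix k), sum_sub_inter_prefixSet, h0,
    sub_zero]

-- The sorting formula for `lovasz`, after summation by parts.
variable (f) in
def greedy (σ : Equiv.Perm (Fin m)) : (Fin m → ℝ) →ₗ[ℝ] ℝ :=
  ∑ k, marginal f σ k • LinearMap.proj (σ k)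

theorem greedy_apply (σ : Equiv.Perm (Fin m)) (x : Fin m → ℝ) :
    greedy f σ x = ∑ k, marginal f σ k * x (σ k) := by
  simp [greedy]

theorem integral_sum_ite_marginal (σ : Equiv.Perm (Fin m)) {x : Fin m → ℝ}
    (hx : ∀ i, x i ∈ Set.Icc (0 : ℝ) 1) :
    ∫ t in (0 : ℝ)..1, ∑ k, (if t ≤ x (σ k) then marginal f σ k else 0) = greedy f σ x := by
  rw [greedy_apply]
  exact integral_sum_ite_le _ _ fun k _ => hx (σ k)

theorem sum_ite_marginal_le_levelSet
    (hf : ∀ A B : Finset (Fin m), f (A ∩ B) + f (A ∪ B) ≤ f A + f B) (h0 : f ∅ = 0)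
    (σ : Equiv.Perm (Fin m)) (x : Fin m → ℝ) (t : ℝ) :
    ∑ k, (if t ≤ x (σ k) then marginal f σ k else 0) ≤ f (univ.filter fun i => t ≤ x i) := by
  simpa using sum_ite_marginal_le hf h0 σ (univ.filter fun i => t ≤ x i)

theorem sum_ite_marginal_eq_levelSet (h0 : f ∅ = 0) {σ : Equiv.Perm (Fin m)} {x : Fin m → ℝ}
    (hσ : Antitone (x ∘ σ)) (t : ℝ) :
    ∑ k, (if t ≤ x (σ k) then marginal f σ k else 0) = f (univ.filter fun i => t ≤ x i) := by
  have hlower : IsLowerSet {k | σ k ∈ univ.filter fun i => t ≤ x i} := fun j k hkj hj => by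
    simp only [Set.mem_ofPred_eq, mem_filter, mem_univ, true_and] at hj ⊢
    exact hj.trans (hσ hkj)
  simpa using sum_ite_marginal_eq h0 σ hlower

theorem lovasz_eq_greedy (h0 : f ∅ = 0) {σ : Equiv.Perm (Fin m)} {x : Fin m → ℝ}
    (hσ : Antitone (x ∘ σ)) (hx : ∀ i, x i ∈ Set.Icc (0 : ℝ) 1) :
    lovasz f x = greedy f σ x := by
  simp only [lovasz, ← sum_ite_marginal_eq_levelSet h0 hσ, integral_sum_ite_marginal σ hx]

theorem exists_antitone_comp_perm (x : Fin m → ℝ) : ∃ σ : Equiv.Perm (Fin m), Antitone (x ∘ σ) :=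
  ⟨_, monotone_toDual_comp_iff.1 (Tuple.monotone_sort (OrderDual.toDual ∘ x))⟩

theorem greedy_le_lovasz (hf : ∀ A B : Finset (Fin m), f (A ∩ B) + f (A ∪ B) ≤ f A + f B)
    (h0 : f ∅ = 0) (σ : Equiv.Perm (Fin m)) {x : Fin m → ℝ}
    (hx : ∀ i, x i ∈ Set.Icc (0 : ℝ) 1) :
    greedy f σ x ≤ lovasz f x := by
  obtain ⟨τ, hτ⟩ := exists_antitone_comp_perm x
  rw [lovasz_eq_greedy h0 hτ hx, ← integral_sum_ite_marginal σ hx,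
    ← integral_sum_ite_marginal τ hx]
  refine intervalIntegral.integral_mono_on zero_le_one (intervalIntegrable_sum_ite_le _ _ _)
    (intervalIntegrable_sum_ite_le _ _ _) fun t _ => ?_
  rw [sum_ite_marginal_eq_levelSet h0 hτ]
  exact sum_ite_marginal_le_levelSet hf h0 σ x t

end Lovasz

open Lovasz in
theorem lovasz_convexOn_of_submodular {m : ℕ} (f : Finset (Fin m) → ℝ)
    (hf : ∀ A B : Finset (Fin m), f (A ∩ B) + f (A ∪ B) ≤ f A + f B)
    (h0 : f ∅ = 0) :
    ConvexOn ℝ {x : Fin m → ℝ | ∀ i, x i ∈ Set.Icc (0:ℝ) 1} (lovasz f) := by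
  have hbox : Convex ℝ {x : Fin m → ℝ | ∀ i, x i ∈ Set.Icc (0:ℝ) 1} := by
    simpa [Set.pi] using convex_pi (s := Set.univ) fun (_ : Fin m) _ => convex_Icc (0:ℝ) 1
  refine convexOn_of_linearMap_le_of_exists_eq hbox (greedy f) (fun σ x hx => ?_) fun x hx => ?_
  · exact greedy_le_lovasz hf h0 σ hx
  · obtain ⟨σ, hσ⟩ := exists_antitone_comp_perm x
    exact ⟨σ, (lovasz_eq_greedy h0 hσ hx).symm⟩
end

section
/- If the Lovász extension f_lv of a set function f with f(∅) = 0 is convex on [0,1]^|S|, then f is submodular. -/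
/-! At a vertex `1_A` of the cube the Lovász extension equals `f A`. At the midpoint of `1_A` and
`1_B` every coordinate is `0`, `1/2` or `1`, so the level sets are `A ∪ B` for `t < 1/2` and
`A ∩ B` for `t > 1/2`, and the extension takes the value `(f (A ∪ B) + f (A ∩ B)) / 2` there.
Convexity along the segment from `1_A` to `1_B`, evaluated at its midpoint, is therefore
submodularity. -/

open MeasureTheory Set

theorem intervalIntegral.integral_eq_of_eqOn_Ioo {g : ℝ → ℝ} {a b c : ℝ} (hab : a ≤ b)
    (hg : EqOn g (fun _ => c) (Ioo a b)) :
    ∫ t in a..b, g t = (b - a) * c := by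
  rw [integral_congr_Ioo_of_le hab hg, intervalIntegral.integral_const, smul_eq_mul]

theorem intervalIntegrable_of_eqOn_Ioo {g : ℝ → ℝ} {a b c : ℝ} (hab : a ≤ b)
    (hg : EqOn g (fun _ => c) (Ioo a b)) :
    IntervalIntegrable g volume a b :=
  (intervalIntegrable_congr_uIoo (uIoo_of_le hab ▸ hg)).mpr intervalIntegrable_const

theorem lovasz_eq_of_levelSets {m : ℕ} (f : Finset (Fin m) → ℝ) (x : Fin m → ℝ)
    {s : ℝ} (hs : s ∈ Icc (0:ℝ) 1) (C D : Finset (Fin m))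
    (hC : ∀ t ∈ Ioo 0 s, Finset.univ.filter (fun i => t ≤ x i) = C)
    (hD : ∀ t ∈ Ioo s 1, Finset.univ.filter (fun i => t ≤ x i) = D) :
    lovasz f x = s * f C + (1 - s) * f D := by
  have hC' : EqOn (fun t => f (Finset.univ.filter fun i => t ≤ x i)) (fun _ => f C) (Ioo 0 s) :=
    fun t ht => congrArg f (hC t ht)
  have hD' : EqOn (fun t => f (Finset.univ.filter fun i => t ≤ x i)) (fun _ => f D) (Ioo s 1) :=
    fun t ht => congrArg f (hD t ht)
  rw [lovasz, ← intervalIntegral.integral_add_adjacent_intervals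
      (intervalIntegrable_of_eqOn_Ioo hs.1 hC') (intervalIntegrable_of_eqOn_Ioo hs.2 hD'),
    intervalIntegral.integral_eq_of_eqOn_Ioo hs.1 hC',
    intervalIntegral.integral_eq_of_eqOn_Ioo hs.2 hD', sub_zero]

theorem indicator_mem_unitCube {m : ℕ} (A : Finset (Fin m)) :
    (A : Set (Fin m)).indicator 1 ∈ {x : Fin m → ℝ | ∀ i, x i ∈ Icc (0:ℝ) 1} := by
  intro i
  by_cases hi : i ∈ A <;> simp [hi]

theorem lovasz_indicator {m : ℕ} (f : Finset (Fin m) → ℝ) (A : Finset (Fin m)) :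
    lovasz f ((A : Set (Fin m)).indicator 1) = f A := by
  have hA : ∀ t ∈ Ioo (0:ℝ) 1,
      Finset.univ.filter (fun i => t ≤ (A : Set (Fin m)).indicator 1 i) = A := by
    intro t ht
    ext i
    by_cases hi : i ∈ A <;> simp [indicator_apply, hi, ht.1, ht.2.le]
  rw [lovasz_eq_of_levelSets f _ (right_mem_Icc.mpr zero_le_one) A ∅ hA
    (by simp), one_mul, sub_self, zero_mul, add_zero]

theorem lovasz_midpoint_indicator {m : ℕ} (f : Finset (Fin m) → ℝ) (A B : Finset (Fin m)) :
    lovasz f ((1/2 : ℝ) • (A : Set (Fin m)).indicator 1 + (1/2 : ℝ) • (B : Set (Fin m)).indicator 1)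
      = (f (A ∪ B) + f (A ∩ B)) / 2 := by
  rw [lovasz_eq_of_levelSets f _ (s := 1/2) ⟨by norm_num, by norm_num⟩ (A ∪ B) (A ∩ B)]
  · ring
  all_goals
    intro t ht
    ext i
    obtain ⟨ht₀, ht₁⟩ := ht
    by_cases hiA : i ∈ A <;> by_cases hiB : i ∈ B <;>
      simp [indicator_apply, hiA, hiB] <;> linarith

theorem submodular_of_lovasz_convexOn_general {m : ℕ} (f : Finset (Fin m) → ℝ)
    (hconv : ConvexOn ℝ {x : Fin m → ℝ | ∀ i, x i ∈ Set.Icc (0:ℝ) 1} (lovasz f)) :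
    ∀ A B : Finset (Fin m), f (A ∩ B) + f (A ∪ B) ≤ f A + f B := by
  intro A B
  have hmid := hconv.2 (indicator_mem_unitCube A) (indicator_mem_unitCube B)
    (by norm_num : (0:ℝ) ≤ 1/2) (by norm_num : (0:ℝ) ≤ 1/2) (by norm_num)
  rw [lovasz_midpoint_indicator, lovasz_indicator, lovasz_indicator, smul_eq_mul,
    smul_eq_mul] at hmid
  linarith

theorem submodular_of_lovasz_convexOn {m : ℕ} (f : Finset (Fin m) → ℝ)
    (h0 : f ∅ = 0)
    (hconv : ConvexOn ℝ {x : Fin m → ℝ | ∀ i, x i ∈ Set.Icc (0:ℝ) 1} (lovasz f)) :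
    ∀ A B : Finset (Fin m), f (A ∩ B) + f (A ∪ B) ≤ f A + f B :=
  submodular_of_lovasz_convexOn_general f hconv
end

section
/- For a submodular set function f with f(∅) = 0, the minimum of f over subsets of S equals the minimum of f_lv over {0,1}^|S|, and any minimizer x* of f_lv over [0,1]^|S| yields, for each threshold t ∈ (0,1], a minimizing set A_t = {s_i : x*(i) ≥ t} of f. -/
/-!
Since `lovasz f x = ∫₀¹ f(A_t) dt` averages `f` over the superlevel sets of `x`, it is at least
`min f`, with equality at the indicator vector of a minimizer; and it equals `f A` at the indicator
vector of `A`, so on `{0,1}^m` it takes exactly the values of `f`. For a minimizer `x*` and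
`t ∈ (0,1]`, the superlevel set is constant on some interval `(c, t]`, so
`lovasz f x* ≥ min f + (t - c) (f(A_t) - min f)`, which forces `f(A_t) = min f`.
-/

open MeasureTheory Set Filter Topology

section Superlevel

variable {ι : Type*} [Fintype ι]

noncomputable def superlevel (x : ι → ℝ) (t : ℝ) : Finset ι := {i | t ≤ x i}

theorem mem_superlevel {x : ι → ℝ} {t : ℝ} {i : ι} : i ∈ superlevel x t ↔ t ≤ x i := by
  simp [superlevel]

theorem measurable_superlevel (x : ι → ℝ) : Measurable (superlevel x) :=
  measurable_finset_iff.2 fun i => by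
    simpa only [mem_superlevel] using measurableSet_setOfPred.1 measurableSet_Iic

theorem intervalIntegrable_comp_superlevel (g : Finset ι → ℝ) (x : ι → ℝ) (a b : ℝ) :
    IntervalIntegrable (fun t => g (superlevel x t)) volume a b := by
  obtain ⟨M, hM⟩ := Finite.exists_le fun A => ‖g A‖
  have hint : ∀ a b : ℝ, IntegrableOn (fun t => g (superlevel x t)) (Ioc a b) volume :=
    fun a b => Measure.integrableOn_of_bounded measure_Ioc_lt_top.ne
      (Measurable.of_discrete.comp (measurable_superlevel x)).aestronglyMeasurable
      (.of_forall fun t => hM _)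
  exact ⟨hint a b, hint b a⟩

theorem eventually_superlevel_eq (x : ι → ℝ) (t : ℝ) :
    ∀ᶠ s in 𝓝[≤] t, superlevel x s = superlevel x t := by
  have hcoord : ∀ i, ∀ᶠ s in 𝓝[≤] t, (s ≤ x i ↔ t ≤ x i) := by
    intro i
    rcases le_or_gt t (x i) with h | h
    · filter_upwards [self_mem_nhdsWithin] with s hs
      exact iff_of_true (le_trans hs h) h
    · filter_upwards [nhdsWithin_le_nhds (lt_mem_nhds h)] with s hs
      exact iff_of_false (not_le.2 hs) (not_le.2 h)
  filter_upwards [eventually_all.2 hcoord] with s hs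
  ext i
  simp only [mem_superlevel, hs i]

theorem superlevel_indicator_one (A : Finset ι) {t : ℝ} (ht : t ∈ Ioc (0 : ℝ) 1) :
    superlevel ((A : Set ι).indicator 1) t = A := by
  ext i
  by_cases hi : i ∈ A <;> simp [mem_superlevel, hi, ht.2, ht.1]

theorem setOf_forall_eq_zero_or_eq_one :
    {x : ι → ℝ | ∀ i, x i = 0 ∨ x i = 1} = range fun A : Finset ι => (A : Set ι).indicator 1 := by
  ext x
  constructor
  · intro hx
    refine ⟨({i | x i = 1} : Finset ι), funext fun i => ?_⟩
    rcases hx i with h | h <;> simp [h]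
  · rintro ⟨A, rfl⟩ i
    by_cases hi : i ∈ A <;> simp [hi]

end Superlevel

section Lovasz

variable {m : ℕ} (f : Finset (Fin m) → ℝ)

theorem lovasz_eq_integral_superlevel (x : Fin m → ℝ) :
    lovasz f x = ∫ t in (0:ℝ)..1, f (superlevel x t) :=
  rfl

theorem lovasz_indicator_one (A : Finset (Fin m)) :
    lovasz f ((A : Set (Fin m)).indicator 1) = f A := by
  rw [lovasz_eq_integral_superlevel, intervalIntegral.integral_congr_ae (g := fun _ => f A)
    (.of_forall fun t ht => by
      rw [uIoc_of_le zero_le_one] at ht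
      rw [superlevel_indicator_one A ht])]
  simp

theorem image_lovasz_vertices :
    lovasz f '' {x : Fin m → ℝ | ∀ i, x i = 0 ∨ x i = 1} = range f := by
  rw [setOf_forall_eq_zero_or_eq_one, ← range_comp]
  exact congrArg range (funext (lovasz_indicator_one f))

theorem add_mul_le_lovasz {x : Fin m → ℝ} {μ c t : ℝ} (hμ : ∀ A, μ ≤ f A) (hc : 0 ≤ c)
    (hct : c ≤ t) (ht : t ≤ 1) (hconst : ∀ s ∈ Ioc c t, superlevel x s = superlevel x t) :
    μ + (t - c) * (f (superlevel x t) - μ) ≤ lovasz f x := by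
  have hint := intervalIntegrable_comp_superlevel f x
  have hexcess : (t - c) * (f (superlevel x t) - μ) = ∫ s in c..t, (f (superlevel x s) - μ) := by
    rw [intervalIntegral.integral_congr_ae (g := fun _ => f (superlevel x t) - μ)
      (.of_forall fun s hs => by rw [uIoc_of_le hct] at hs; rw [hconst s hs])]
    simp only [intervalIntegral.integral_const, smul_eq_mul]
  have hmono : ∫ s in c..t, (f (superlevel x s) - μ) ≤ ∫ s in (0:ℝ)..1, (f (superlevel x s) - μ) :=
    intervalIntegral.integral_mono_interval hc hct ht
      (.of_forall fun s => sub_nonneg.2 (hμ _)) ((hint 0 1).sub intervalIntegrable_const)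
  rw [intervalIntegral.integral_sub (hint 0 1) intervalIntegrable_const] at hmono
  simp only [intervalIntegral.integral_const, sub_zero, smul_eq_mul, one_mul] at hmono
  rw [lovasz_eq_integral_superlevel]
  linarith

end Lovasz

theorem min_submodular_vertices_and_thresholds_general {m : ℕ} (f : Finset (Fin m) → ℝ) :
    sInf (Set.range f) =
      sInf (lovasz f '' {x : Fin m → ℝ | ∀ i, x i = 0 ∨ x i = 1}) ∧
    ∀ xs : Fin m → ℝ, (∀ i, xs i ∈ Set.Icc (0:ℝ) 1) →
      (∀ y : Fin m → ℝ, (∀ i, y i ∈ Set.Icc (0:ℝ) 1) → lovasz f xs ≤ lovasz f y) →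
      ∀ t : ℝ, 0 < t → t ≤ 1 →
        ∀ A : Finset (Fin m), f (Finset.univ.filter fun i => t ≤ xs i) ≤ f A := by
  refine ⟨by rw [image_lovasz_vertices], fun xs _ hmin t ht ht1 A => ?_⟩
  obtain ⟨B, hB⟩ := Finite.exists_min f
  have hxsB : lovasz f xs ≤ f B := by
    refine lovasz_indicator_one f B ▸ hmin _ fun i => ?_
    by_cases hi : i ∈ B <;> simp [hi]
  obtain ⟨c, hct, hc⟩ := mem_nhdsLE_iff_exists_Ioc_subset.1 (eventually_superlevel_eq xs t)
  have hgap : 0 < t - max c 0 := sub_pos.2 (max_lt hct ht)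
  have hexcess := add_mul_le_lovasz f hB (le_max_right c 0) (max_le hct.le ht.le) ht1
    fun s hs => hc (Ioc_subset_Ioc_left (le_max_left c 0) hs)
  have hAt : f (superlevel xs t) ≤ f B := by nlinarith
  exact hAt.trans (hB A)

theorem min_submodular_vertices_and_thresholds {m : ℕ} (f : Finset (Fin m) → ℝ)
    (hf : ∀ A B : Finset (Fin m), f (A ∩ B) + f (A ∪ B) ≤ f A + f B)
    (h0 : f ∅ = 0) :
    sInf (Set.range f) =
      sInf (lovasz f '' {x : Fin m → ℝ | ∀ i, x i = 0 ∨ x i = 1}) ∧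
    ∀ xs : Fin m → ℝ, (∀ i, xs i ∈ Set.Icc (0:ℝ) 1) →
      (∀ y : Fin m → ℝ, (∀ i, y i ∈ Set.Icc (0:ℝ) 1) → lovasz f xs ≤ lovasz f y) →
      ∀ t : ℝ, 0 < t → t ≤ 1 →
        ∀ A : Finset (Fin m), f (Finset.univ.filter fun i => t ≤ xs i) ≤ f A :=
  min_submodular_vertices_and_thresholds_general f
end
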